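/- Let α > 1, m > 0, c₁ > 0, R > 0, a ≥ 0, b ≥ 0, and let y > 0 and z ∈ ℝ satisfy y − αz > 0. Then for every ε ∈ (0,1): (y − z)² − (m c₁/R)·√y·(y − αz) − m·a·y − m·b·√y ≥ (y − αz)²/α² − (m c₁/R)²·α²·(y − αz)/(8(α−1)) − (α² m² a²)/(4(1−ε)(α−1)²) − (3/4)·(m⁴ b⁴ α²/(4ε(α−1)²))^{1/3}. -/

import Mathlib

/-!
Write `u = y - α z`, so that `y - z = u / α + (1 - 1/α) y`. Expanding the square produces
`u² / α²`, a cross term `2 (α - 1) / α² · y u` and `(α - 1)² / α² · y²`. The cross term absorbs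
`(m c₁ / R) √y u` by the quadratic AM–GM inequality, and the last term is split in the ratio
`(1 - ε) : ε` to absorb `m a y` (again by AM–GM) and `m b √y` (by Young's inequality with exponents
`4` and `4/3`).
-/

lemma mul_le_sq_add_sq_div (K w x : ℝ) (hK : 0 < K) :
    w * x ≤ K * x ^ 2 + w ^ 2 / (4 * K) := by
  have hsq : K * x ^ 2 + w ^ 2 / (4 * K) - w * x = (2 * K * x - w) ^ 2 / (4 * K) := by
    field_simp
    ring
  have : 0 ≤ (2 * K * x - w) ^ 2 / (4 * K) := by positivity
  linarith

lemma mul_le_pow_four_add_rpow_of_nonneg (K w s : ℝ) (hK : 0 < K) (hw : 0 ≤ w)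
    (hs : 0 ≤ s) :
    w * s ≤ K * s ^ 4 + (3 / 4) * (w ^ 4 / (4 * K)) ^ ((1 : ℝ) / 3) := by
  -- With `w = 4 K t³` the claim becomes `s⁴ - 4 t³ s + 3 t⁴ = (s - t)² (s² + 2 s t + 3 t²) ≥ 0`.
  set t := (w / (4 * K)) ^ ((1 : ℝ) / 3)
  have ht : 0 ≤ t := by positivity
  have hw_eq : w = 4 * K * t ^ 3 := by
    rw [← Real.rpow_natCast, ← Real.rpow_mul (by positivity)]
    norm_num
    field_simp
  have hroot : (w ^ 4 / (4 * K)) ^ ((1 : ℝ) / 3) = 4 * K * t ^ 4 := by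
    have hcube : w ^ 4 / (4 * K) = (4 * K * t ^ 4) ^ 3 := by
      rw [hw_eq]
      field_simp
    rw [hcube, ← Real.rpow_natCast, ← Real.rpow_mul (by positivity)]
    norm_num
  rw [hroot, hw_eq]
  have hfactor : 0 ≤ (s - t) ^ 2 * (s ^ 2 + 2 * s * t + 3 * t ^ 2) := by positivity
  nlinarith [mul_nonneg hK.le hfactor]

lemma mul_le_pow_four_add_rpow (K w s : ℝ) (hK : 0 < K) (hs : 0 ≤ s) :
    w * s ≤ K * s ^ 4 + (3 / 4) * (w ^ 4 / (4 * K)) ^ ((1 : ℝ) / 3) := by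
  have h := mul_le_pow_four_add_rpow_of_nonneg K |w| s hK (abs_nonneg w) hs
  rw [pow_abs, abs_of_nonneg (by positivity : (0 : ℝ) ≤ w ^ 4)] at h
  nlinarith [le_abs_self w]

lemma sub_sq_eq_sub_mul_expansion (α y z : ℝ) (hα : α ≠ 0) :
    (y - z) ^ 2 = (y - α * z) ^ 2 / α ^ 2 + 2 * (α - 1) / α ^ 2 * y * (y - α * z)
      + (α - 1) ^ 2 / α ^ 2 * y ^ 2 := by
  field_simp
  ring

theorem stmt_1_general (α m c₁ R a b y z ε : ℝ) (hα : 1 < α)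
    (hy : 0 < y) (hyz : 0 < y - α * z)
    (hε : ε ∈ Set.Ioo (0 : ℝ) 1) :
    (y - z) ^ 2 - (m * c₁ / R) * Real.sqrt y * (y - α * z) - m * a * y - m * b * Real.sqrt y ≥
      (y - α * z) ^ 2 / α ^ 2 - (m * c₁ / R) ^ 2 * α ^ 2 * (y - α * z) / (8 * (α - 1))
        - (α ^ 2 * m ^ 2 * a ^ 2) / (4 * (1 - ε) * (α - 1) ^ 2)
        - (3 / 4) * (m ^ 4 * b ^ 4 * α ^ 2 / (4 * ε * (α - 1) ^ 2)) ^ ((1 : ℝ) / 3) := by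
  obtain ⟨hε0, hε1⟩ := hε
  have hα0 : 0 < α := by linarith
  have hα1 : 0 < α - 1 := by linarith
  have hε1' : 0 < 1 - ε := by linarith
  have hsqrt : Real.sqrt y ^ 2 = y := Real.sq_sqrt hy.le
  have hgrad : (m * c₁ / R) * Real.sqrt y * (y - α * z) ≤
      2 * (α - 1) / α ^ 2 * y * (y - α * z)
        + (m * c₁ / R) ^ 2 * α ^ 2 * (y - α * z) / (8 * (α - 1)) := by
    have hconst : (m * c₁ / R) ^ 2 / (4 * (2 * (α - 1) / α ^ 2))
        = (m * c₁ / R) ^ 2 * α ^ 2 / (8 * (α - 1)) := by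
      field_simp
      ring
    have h := mul_le_sq_add_sq_div (2 * (α - 1) / α ^ 2) (m * c₁ / R) (Real.sqrt y)
      (by positivity)
    rw [hsqrt, hconst] at h
    exact (mul_le_mul_of_nonneg_right h hyz.le).trans_eq (by ring)
  have hlin : m * a * y ≤ (1 - ε) * ((α - 1) ^ 2 / α ^ 2) * y ^ 2
      + (α ^ 2 * m ^ 2 * a ^ 2) / (4 * (1 - ε) * (α - 1) ^ 2) := by
    convert mul_le_sq_add_sq_div ((1 - ε) * ((α - 1) ^ 2 / α ^ 2)) (m * a) y (by positivity)
      using 2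
    field_simp
  have hsub : m * b * Real.sqrt y ≤ ε * ((α - 1) ^ 2 / α ^ 2) * y ^ 2
      + (3 / 4) * (m ^ 4 * b ^ 4 * α ^ 2 / (4 * ε * (α - 1) ^ 2)) ^ ((1 : ℝ) / 3) := by
    convert mul_le_pow_four_add_rpow (ε * ((α - 1) ^ 2 / α ^ 2)) (m * b) (Real.sqrt y)
      (by positivity) (Real.sqrt_nonneg y) using 3
    · rw [show 4 = 2 * 2 from rfl, pow_mul, hsqrt]
    · field_simp
  rw [sub_sq_eq_sub_mul_expansion α y z (by positivity)]
  linarith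

theorem stmt_1 (α m c₁ R a b y z ε : ℝ) (hα : 1 < α) (hm : 0 < m) (hc : 0 < c₁)
    (hR : 0 < R) (ha : 0 ≤ a) (hb : 0 ≤ b) (hy : 0 < y) (hyz : 0 < y - α * z)
    (hε : ε ∈ Set.Ioo (0 : ℝ) 1) :
    (y - z) ^ 2 - (m * c₁ / R) * Real.sqrt y * (y - α * z) - m * a * y - m * b * Real.sqrt y ≥
      (y - α * z) ^ 2 / α ^ 2 - (m * c₁ / R) ^ 2 * α ^ 2 * (y - α * z) / (8 * (α - 1))
        - (α ^ 2 * m ^ 2 * a ^ 2) / (4 * (1 - ε) * (α - 1) ^ 2)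
        - (3 / 4) * (m ^ 4 * b ^ 4 * α ^ 2 / (4 * ε * (α - 1) ^ 2)) ^ ((1 : ℝ) / 3) :=
  stmt_1_general α m c₁ R a b y z ε hα hy hyz hε
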